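/- arXiv:1811.01988 — 3 statements merged into one kernel-verified Lean document; each statement's English description precedes it below -/
import Mathlib

section
/- Let d = 2 and let Q ⊆ ℝ^η × ℝ × ℝ^2 be the set of (x, y, z) with x ∈ [L, U], z ∈ Δ^2, satisfying: y ≥ w^k · x + b^k for k = 1, 2; y ≤ w^ℓ · x + Σ_{k=1}^2 (N^{ℓ,k} + b^k) z_k for ℓ = 1, 2, where N^{ℓ,k} = Σ_{i=1}^η max{(w^k_i − w^ℓ_i) L_i, (w^k_i − w^ℓ_i) U_i}; and, for every mapping I : {1,…,η} → {1, 2}, y ≤ Σ_{i=1}^η ( w^{I(i)}_i x_i + Σ_{k=1}^2 max{(w^k_i − w^{I(i)}_i) L_i, (w^k_i − w^{I(i)}_i) U_i} z_k ) + Σ_{k=1}^2 b^k z_k. Then this formulation is ideal: every extreme point (x, y, z) of Q satisfies z ∈ {0,1}^2. -/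
noncomputable section

/-- Dot product on `Fin n → ℝ`. -/
def dotp {n : ℕ} (w x : Fin n → ℝ) : ℝ := ∑ i, w i * x i

/-!
Let `(x, y, z) ∈ Q` with `z = (t, 1 - t)`, `0 < t < 1`. Over the convex set of splits
`x = t a + (1 - t) c` with `a, c ∈ [L, U]`, the continuous function
`t (w¹ · a + b¹) + (1 - t) (w² · c + b²)` is at most `y` at `a = c = x` by the lower bounds on `y`,
and at least `y` at a split that pushes each coordinate to an endpoint of the box, by the
upper bound for the matching map `I`. By the intermediate value theorem some split attains `y`,
and it writes `(x, y, z)` as `t (a, w¹ · a + b¹, e₁) + (1 - t) (c, w² · c + b², e₂)`. The lower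
bounds on `y` force piece `1` to be active at `a` and piece `2` at `c`, so both points lie in `Q`
and `(x, y, z)` is not extreme.
-/

lemma dotp_add_smul {n : ℕ} (w a c : Fin n → ℝ) (t s : ℝ) :
    dotp w (t • a + s • c) = t * dotp w a + s * dotp w c := by
  change w ⬝ᵥ (t • a + s • c) = t * (w ⬝ᵥ a) + s * (w ⬝ᵥ c)
  simp [dotProduct_add, dotProduct_smul]

lemma mul_le_max_mul_of_mem_Icc {u s l r : ℝ} (hs : s ∈ Set.Icc l r) :
    u * s ≤ max (u * l) (u * r) := by
  rcases le_total 0 u with hu | hu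
  · exact le_max_of_le_right (mul_le_mul_of_nonneg_left hs.2 hu)
  · exact le_max_of_le_left (mul_le_mul_of_nonpos_left hs.1 hu)

lemma dotp_le_sum_mul_add_max {n : ℕ} {L U a : Fin n → ℝ} (ha : a ∈ Set.Icc L U)
    (u v : Fin n → ℝ) :
    dotp u a ≤ ∑ i, (v i * a i + max ((u i - v i) * L i) ((u i - v i) * U i)) :=
  Finset.sum_le_sum fun i _ => by
    linarith [mul_le_max_mul_of_mem_Icc (u := u i - v i) ⟨ha.1 i, ha.2 i⟩]

/-- The formulation `Q` of the paper, for affine pieces `w k · x + b k` indexed by `κ`. -/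
def maxFormulation {η : ℕ} {κ : Type*} [Fintype κ] (w : κ → Fin η → ℝ) (b : κ → ℝ)
    (L U : Fin η → ℝ) : Set ((Fin η → ℝ) × ℝ × (κ → ℝ)) :=
  {p | (∀ i, L i ≤ p.1 i ∧ p.1 i ≤ U i) ∧ p.2.2 ∈ stdSimplex ℝ κ
      ∧ (∀ k, dotp (w k) p.1 + b k ≤ p.2.1)
      ∧ (∀ ℓ, p.2.1 ≤ dotp (w ℓ) p.1
          + ∑ k, ((∑ i, max ((w k i - w ℓ i) * L i) ((w k i - w ℓ i) * U i)) + b k) * p.2.2 k)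
      ∧ (∀ I : Fin η → κ, p.2.1 ≤
          ∑ i, (w (I i) i * p.1 i
            + ∑ k, max ((w k i - w (I i) i) * L i) ((w k i - w (I i) i) * U i) * p.2.2 k)
          + ∑ k, b k * p.2.2 k)}

lemma mk_single_mem_maxFormulation {η : ℕ} {κ : Type*} [Fintype κ] [DecidableEq κ]
    {w : κ → Fin η → ℝ} {b : κ → ℝ} {L U a : Fin η → ℝ} {k : κ} (ha : a ∈ Set.Icc L U)
    (hk : ∀ ℓ, dotp (w ℓ) a + b ℓ ≤ dotp (w k) a + b k) :
    (a, dotp (w k) a + b k, Pi.single k 1) ∈ maxFormulation w b L U := by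
  refine ⟨fun i => ⟨ha.1 i, ha.2 i⟩, single_mem_stdSimplex ℝ k, hk, fun ℓ => ?_, fun I => ?_⟩
  · have := dotp_le_sum_mul_add_max ha (w k) (w ℓ)
    simp only [Finset.sum_add_distrib] at this
    simp only [Pi.single_apply, mul_ite, mul_one, mul_zero, Finset.sum_ite_eq', Finset.mem_univ,
      if_true]
    unfold dotp at *
    linarith
  · have := dotp_le_sum_mul_add_max ha (w k) (fun i => w (I i) i)
    simp only [Pi.single_apply, mul_ite, mul_one, mul_zero, Finset.sum_ite_eq', Finset.mem_univ,
      if_true]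
    linarith

lemma exists_split_endpoint {x l r t s : ℝ} (hx : x ∈ Set.Icc l r) (ht : 0 < t) (hs : 0 < s)
    (hts : t + s = 1) :
    ∃ A ∈ Set.Icc l r, ∃ C ∈ Set.Icc l r, x = t * A + s * C ∧ (A = r ∨ C = l) := by
  obtain ⟨hl, hr⟩ := hx
  have hr' : r = t * r + s * r := by linear_combination -r * hts
  have hl' : l = t * l + s * l := by linear_combination -l * hts
  rcases le_total (t * r) (x - s * l) with h | h
  · refine ⟨r, ⟨by linarith, le_rfl⟩, (x - t * r) / s, ⟨?_, ?_⟩, ?_, .inl rfl⟩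
    · rw [le_div_iff₀ hs]; linarith
    · rw [div_le_iff₀ hs]; linarith
    · field_simp; ring
  · refine ⟨(x - s * l) / t, ⟨?_, ?_⟩, l, ⟨le_rfl, by linarith⟩, ?_, .inr rfl⟩
    · rw [le_div_iff₀ ht]; linarith
    · rw [div_le_iff₀ ht]; linarith
    · field_simp; ring

/- The split objective `t w₀ A + s w₁ C` equals `w₀ x + s (w₁ - w₀) C = w₁ x + t (w₀ - w₁) A`,
so an endpoint `C = l` or `A = r` (for `w₁ ≤ w₀`) attains one of the two bounds. -/
lemma exists_split_ge_min {w₀ w₁ x l r t s : ℝ} (hx : x ∈ Set.Icc l r) (ht : 0 < t) (hs : 0 < s)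
    (hts : t + s = 1) :
    ∃ A ∈ Set.Icc l r, ∃ C ∈ Set.Icc l r, x = t * A + s * C ∧
      (w₀ * x + max ((w₁ - w₀) * l) ((w₁ - w₀) * r) * s ≤ t * (w₀ * A) + s * (w₁ * C) ∨
        w₁ * x + max ((w₀ - w₁) * l) ((w₀ - w₁) * r) * t ≤ t * (w₀ * A) + s * (w₁ * C)) := by
  wlog hw : w₁ ≤ w₀ generalizing w₀ w₁ t s
  · obtain ⟨C, hC, A, hA, hxCA, h⟩ := this (w₀ := w₁) (w₁ := w₀) hs ht (by linarith) (by linarith)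
    refine ⟨A, hA, C, hC, by linarith, ?_⟩
    rcases h with h | h
    exacts [.inr (by linarith), .inl (by linarith)]
  have hlr : l ≤ r := hx.1.trans hx.2
  rw [max_eq_left (mul_le_mul_of_nonpos_left hlr (by linarith)),
    max_eq_right (mul_le_mul_of_nonneg_left hlr (by linarith))]
  obtain ⟨A, hA, C, hC, hxAC, rfl | rfl⟩ := exists_split_endpoint hx ht hs hts
  · exact ⟨_, hA, C, hC, hxAC, .inr (le_of_eq (by linear_combination w₁ * hxAC))⟩
  · exact ⟨A, hA, _, hC, hxAC, .inl (le_of_eq (by linear_combination w₀ * hxAC))⟩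

lemma exists_split_eq_of_continuous {ι : Type*} {L U x A C : ι → ℝ} {f g : (ι → ℝ) → ℝ}
    {t s y : ℝ} (hf : Continuous f) (hg : Continuous g) (hx : x ∈ Set.Icc L U)
    (hA : A ∈ Set.Icc L U) (hC : C ∈ Set.Icc L U) (hts : t + s = 1) (hxAC : x = t • A + s • C)
    (hlo : t * f x + s * g x ≤ y) (hhi : y ≤ t * f A + s * g C) :
    ∃ a ∈ Set.Icc L U, ∃ c ∈ Set.Icc L U, x = t • a + s • c ∧ t * f a + s * g c = y := by
  have hlin : IsLinearMap ℝ fun q : (ι → ℝ) × (ι → ℝ) => t • q.1 + s • q.2 :=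
    (t • LinearMap.fst ℝ (ι → ℝ) (ι → ℝ) + s • LinearMap.snd ℝ (ι → ℝ) (ι → ℝ)).isLinear
  have hconv : Convex ℝ (Set.Icc L U ×ˢ Set.Icc L U ∩ {q | t • q.1 + s • q.2 = x}) :=
    ((convex_Icc L U).prod (convex_Icc L U)).inter (convex_hyperplane hlin x)
  have hxx : x = t • x + s • x := by rw [← add_smul, hts, one_smul]
  obtain ⟨⟨a, c⟩, ⟨⟨ha, hc⟩, hac⟩, hy⟩ := hconv.isPreconnected.intermediate_value
    (a := (x, x)) (b := (A, C)) ⟨⟨hx, hx⟩, hxx.symm⟩ ⟨⟨hA, hC⟩, hxAC.symm⟩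
    (by fun_prop : Continuous fun q : (ι → ℝ) × (ι → ℝ) => t * f q.1 + s * g q.2).continuousOn
    ⟨hlo, hhi⟩
  exact ⟨a, ha, c, hc, hac.symm, hy⟩

section FinTwo

variable {η : ℕ} {w : Fin 2 → Fin η → ℝ} {b : Fin 2 → ℝ} {L U : Fin η → ℝ}

lemma exists_split_ge {x : Fin η → ℝ} {y : ℝ} {z : Fin 2 → ℝ} (hx : x ∈ Set.Icc L U)
    (h0 : 0 < z 0) (h1 : 0 < z 1) (hz : z 0 + z 1 = 1)
    (hI : ∀ I : Fin η → Fin 2, y ≤ ∑ i, (w (I i) i * x i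
        + ∑ k, max ((w k i - w (I i) i) * L i) ((w k i - w (I i) i) * U i) * z k)
        + ∑ k, b k * z k) :
    ∃ A ∈ Set.Icc L U, ∃ C ∈ Set.Icc L U, x = z 0 • A + z 1 • C ∧
      y ≤ z 0 * (dotp (w 0) A + b 0) + z 1 * (dotp (w 1) C + b 1) := by
  have hsplit : ∀ i, ∃ A ∈ Set.Icc (L i) (U i), ∃ C ∈ Set.Icc (L i) (U i),
      x i = z 0 * A + z 1 * C ∧ ∃ k : Fin 2,
        w k i * x i + ∑ j, max ((w j i - w k i) * L i) ((w j i - w k i) * U i) * z j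
          ≤ z 0 * (w 0 i * A) + z 1 * (w 1 i * C) := fun i => by
    obtain ⟨A, hA, C, hC, hxi, h | h⟩ :=
      exists_split_ge_min (w₀ := w 0 i) (w₁ := w 1 i) ⟨hx.1 i, hx.2 i⟩ h0 h1 hz
    · exact ⟨A, hA, C, hC, hxi, 0, by simpa [Fin.sum_univ_two] using h⟩
    · exact ⟨A, hA, C, hC, hxi, 1, by simpa [Fin.sum_univ_two, add_comm] using h⟩
  choose A hA C hC hxAC I hI' using hsplit
  refine ⟨A, ⟨fun i => (hA i).1, fun i => (hA i).2⟩, C, ⟨fun i => (hC i).1, fun i => (hC i).2⟩,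
    funext hxAC, ?_⟩
  calc y ≤ ∑ i, (w (I i) i * x i
        + ∑ k, max ((w k i - w (I i) i) * L i) ((w k i - w (I i) i) * U i) * z k)
        + ∑ k, b k * z k := hI I
    _ ≤ ∑ i, (z 0 * (w 0 i * A i) + z 1 * (w 1 i * C i)) + ∑ k, b k * z k := by
        gcongr ?_ + _; exact Finset.sum_le_sum fun i _ => hI' i
    _ = z 0 * (dotp (w 0) A + b 0) + z 1 * (dotp (w 1) C + b 1) := by
        rw [Finset.sum_add_distrib, ← Finset.mul_sum, ← Finset.mul_sum]
        simp only [dotp, Fin.sum_univ_two]; ring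

lemma pos_of_mem_stdSimplex_fin_two {z : Fin 2 → ℝ} (hz : z ∈ stdSimplex ℝ (Fin 2)) {k : Fin 2}
    (h0 : z k ≠ 0) (h1 : z k ≠ 1) : 0 < z 0 ∧ 0 < z 1 := by
  obtain ⟨hnn, hsum⟩ := hz
  rw [Fin.sum_univ_two] at hsum
  refine ⟨(hnn 0).lt_of_ne ?_, (hnn 1).lt_of_ne ?_⟩ <;> intro h <;> fin_cases k <;>
    first | exact h0 h.symm | exact h1 (by simp only [Fin.zero_eta, Fin.mk_one]; linarith)

theorem exists_single_zero_mem_openSegment {x : Fin η → ℝ} {y : ℝ} {z : Fin 2 → ℝ}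
    (hp : (x, y, z) ∈ maxFormulation w b L U) (h0 : 0 < z 0) (h1 : 0 < z 1) :
    ∃ q ∈ maxFormulation w b L U, q.2.2 = Pi.single 0 1 ∧
      ∃ q' ∈ maxFormulation w b L U, (x, y, z) ∈ openSegment ℝ q q' := by
  obtain ⟨hx, hz, hlo, -, hI⟩ := hp
  dsimp only at hz hlo hI
  replace hx : x ∈ Set.Icc L U := ⟨fun i => (hx i).1, fun i => (hx i).2⟩
  have hsum : z 0 + z 1 = 1 := by simpa [Fin.sum_univ_two] using hz.2
  have hf : ∀ k, Continuous fun a => dotp (w k) a + b k := fun k => by unfold dotp; fun_prop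
  obtain ⟨A, hA, C, hC, hxAC, hhi⟩ := exists_split_ge hx h0 h1 hsum hI
  have hlo' : z 0 * (dotp (w 0) x + b 0) + z 1 * (dotp (w 1) x + b 1) ≤ y :=
    calc _ ≤ z 0 * y + z 1 * y := by
          gcongr
          exacts [hlo 0, hlo 1]
      _ = y := by rw [← add_mul, hsum, one_mul]
  obtain ⟨a, ha, c, hc, hxac, hy⟩ :=
    exists_split_eq_of_continuous (hf 0) (hf 1) hx hA hC hsum hxAC hlo' hhi
  have hf_split : ∀ k, dotp (w k) x + b k
      = z 0 * (dotp (w k) a + b k) + z 1 * (dotp (w k) c + b k) := fun k => by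
    rw [hxac, dotp_add_smul]; linear_combination -b k * hsum
  have ha_act : ∀ ℓ, dotp (w ℓ) a + b ℓ ≤ dotp (w 0) a + b 0 :=
    Fin.forall_fin_two.2 ⟨le_rfl, le_of_mul_le_mul_left (by linarith [hlo 1, hf_split 1]) h0⟩
  have hc_act : ∀ ℓ, dotp (w ℓ) c + b ℓ ≤ dotp (w 1) c + b 1 :=
    Fin.forall_fin_two.2 ⟨le_of_mul_le_mul_left (by linarith [hlo 0, hf_split 0]) h1, le_rfl⟩
  refine ⟨_, mk_single_mem_maxFormulation ha ha_act, rfl,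
    _, mk_single_mem_maxFormulation hc hc_act, z 0, z 1, h0, h1, hsum, ?_⟩
  refine Prod.ext hxac.symm (Prod.ext hy ?_)
  funext j
  fin_cases j <;> simp

end FinTwo

theorem stmt17_general {η : ℕ}
    (w : Fin 2 → Fin η → ℝ) (b : Fin 2 → ℝ)
    (L U : Fin η → ℝ)
    (Q : Set ((Fin η → ℝ) × ℝ × (Fin 2 → ℝ)))
    (hQ : Q = {p | (∀ i, L i ≤ p.1 i ∧ p.1 i ≤ U i) ∧ p.2.2 ∈ stdSimplex ℝ (Fin 2)
      ∧ (∀ k, dotp (w k) p.1 + b k ≤ p.2.1)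
      ∧ (∀ ℓ, p.2.1 ≤ dotp (w ℓ) p.1
          + ∑ k, ((∑ i, max ((w k i - w ℓ i) * L i) ((w k i - w ℓ i) * U i)) + b k) * p.2.2 k)
      ∧ (∀ I : Fin η → Fin 2, p.2.1 ≤
          ∑ i, (w (I i) i * p.1 i
            + ∑ k, max ((w k i - w (I i) i) * L i) ((w k i - w (I i) i) * U i) * p.2.2 k)
          + ∑ k, b k * p.2.2 k)}) :
    -- the formulation is ideal: every extreme point has binary z
    ∀ p ∈ Set.extremePoints ℝ Q, ∀ k, p.2.2 k = 0 ∨ p.2.2 k = 1 := by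
  change Q = maxFormulation w b L U at hQ
  subst hQ
  rintro ⟨x, y, z⟩ hp k
  by_contra! hk
  obtain ⟨h0, h1⟩ := pos_of_mem_stdSimplex_fin_two hp.1.2.1 hk.1 hk.2
  obtain ⟨q, hq, hqz, q', hq', hpq⟩ := exists_single_zero_mem_openSegment hp.1 h0 h1
  have hz1 : z 1 = 0 := by rw [← show q.2.2 = z from congrArg (·.2.2) (hp.2 hq hq' hpq), hqz]; simp
  exact h1.ne' hz1

theorem stmt17 {η : ℕ} (hη : 1 ≤ η)
    (w : Fin 2 → Fin η → ℝ) (b : Fin 2 → ℝ)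
    (L U : Fin η → ℝ) (hLU : ∀ i, L i ≤ U i)
    (hirr : ∀ k : Fin 2, ∃ x : Fin η → ℝ, (∀ i, L i ≤ x i ∧ x i ≤ U i) ∧
      ∀ ℓ, ℓ ≠ k → dotp (w ℓ) x + b ℓ < dotp (w k) x + b k)
    (Q : Set ((Fin η → ℝ) × ℝ × (Fin 2 → ℝ)))
    (hQ : Q = {p | (∀ i, L i ≤ p.1 i ∧ p.1 i ≤ U i) ∧ p.2.2 ∈ stdSimplex ℝ (Fin 2)
      ∧ (∀ k, dotp (w k) p.1 + b k ≤ p.2.1)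
      ∧ (∀ ℓ, p.2.1 ≤ dotp (w ℓ) p.1
          + ∑ k, ((∑ i, max ((w k i - w ℓ i) * L i) ((w k i - w ℓ i) * U i)) + b k) * p.2.2 k)
      ∧ (∀ I : Fin η → Fin 2, p.2.1 ≤
          ∑ i, (w (I i) i * p.1 i
            + ∑ k, max ((w k i - w (I i) i) * L i) ((w k i - w (I i) i) * U i) * p.2.2 k)
          + ∑ k, b k * p.2.2 k)}) :
    -- the formulation is ideal: every extreme point has binary z
    ∀ p ∈ Set.extremePoints ℝ Q, ∀ k, p.2.2 k = 0 ∨ p.2.2 k = 1 :=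
  stmt17_general w b L U Q hQ
end
end

section
/- Suppose the input domain D = Δ^{p_1} × ⋯ × Δ^{p_τ} is a product of simplices, and the affine function is f(x) = Σ_{i=1}^τ Σ_{j=1}^{p_i} w_{i,j} x_{i,j} + b, with the weights in each simplex sorted so that w_{i,1} ≤ ⋯ ≤ w_{i,p_i}. Let Q ⊆ ℝ^η × ℝ × ℝ be the set of (x, y, z) with x ∈ D, y ≥ 0, z ∈ [0, 1], satisfying y ≥ f(x) and, for every mapping J : {1,…,τ} → ℤ with J(i) ∈ {1,…,p_i} for all i, y ≤ Σ_{i=1}^τ ( w_{i,J(i)} z + Σ_{j = J(i)+1}^{p_i} (w_{i,j} − w_{i,J(i)}) x_{i,j} ) + b z. Then Q together with z ∈ {0,1} is an ideal MIP formulation of gr(ReLU ∘ f; D): (i) the projection onto the (x, y)-coordinates of {(x,y,z) ∈ Q : z ∈ {0,1}} equals gr(ReLU ∘ f; D) = {(x, max{0, f(x)}) : x ∈ D}; and (ii) every extreme point of Q satisfies z ∈ {0,1}. -/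
/-!
For binary `z` the cuts pin `y` down: with `J` the last index of every simplex the cut reads
`y ≤ 0`, with `J` the first index it reads `y ≤ f(x)`; conversely, since the weights are sorted,
every cut holds at `(x, 0, 0)` and at `(x, f(x), 1)`.

For `0 < z < 1`, filling a mass `z` of each simplex greedily from its largest weights gives a part
`u ≤ x` that attains one of the cuts, so `∑ w u + b z ≥ y`, while `u = z x` gives `≤ y`.
Interpolating, some `u` has `∑ w u + b z = y`, and then `(x, y, z)` lies strictly between
`((x - u) / (1 - z), 0, 0)` and `(u / z, f(u / z), 1)`, both in `Q`.
-/

open Finset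

section Simplex

variable {ι : Type*} [Fintype ι] [LinearOrder ι]

def simplexCut (w x : ι → ℝ) (z : ℝ) (J : ι) : ℝ :=
  w J * z + ∑ j ∈ univ.filter (fun j => J < j), (w j - w J) * x j

variable (w : ι → ℝ) {x : ι → ℝ} {z : ℝ}

lemma simplexCut_sub_dotProduct (hx : ∑ j, x j = z) (J : ι) :
    simplexCut w x z J - w ⬝ᵥ x = ∑ j ∈ univ.filter (· ≤ J), (w J - w j) * x j := by
  have hsplit := fun f : ι → ℝ => sum_filter_add_sum_filter_not univ (fun j => J < j) f
  simp only [not_lt] at hsplit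
  rw [simplexCut, dotProduct, ← hsplit (fun j => w j * x j), ← hx, mul_sum,
    ← hsplit (fun j => w J * x j)]
  simp only [sub_mul, sum_sub_distrib]
  ring

lemma dotProduct_le_simplexCut_one {w} (hw : Monotone w) (hx : x ∈ stdSimplex ℝ ι) (J : ι) :
    w ⬝ᵥ x ≤ simplexCut w x 1 J := by
  rw [← sub_nonneg, simplexCut_sub_dotProduct w hx.2]
  exact sum_nonneg fun j hj => mul_nonneg (sub_nonneg.2 (hw (mem_filter.1 hj).2)) (hx.1 j)

lemma simplexCut_one_of_isBot (hx : ∑ j, x j = 1) {J : ι} (hJ : IsBot J) :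
    simplexCut w x 1 J = w ⬝ᵥ x := by
  rw [← sub_eq_zero, simplexCut_sub_dotProduct w hx]
  exact sum_eq_zero fun j hj => by
    rw [le_antisymm (mem_filter.1 hj).2 (hJ j), sub_self, zero_mul]

lemma simplexCut_zero_nonneg {w} (hw : Monotone w) (hx : 0 ≤ x) (J : ι) :
    0 ≤ simplexCut w x 0 J := by
  rw [simplexCut, mul_zero, zero_add]
  exact sum_nonneg fun j hj => mul_nonneg (sub_nonneg.2 (hw (mem_filter.1 hj).2.le)) (hx j)

lemma simplexCut_zero_of_isTop (x : ι → ℝ) {J : ι} (hJ : IsTop J) : simplexCut w x 0 J = 0 := by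
  rw [simplexCut, mul_zero, zero_add]
  exact sum_eq_zero fun j hj => absurd (hJ j) (not_le.2 (mem_filter.1 hj).2)

omit [LinearOrder ι] in
lemma nonempty_of_mem_stdSimplex (hx : x ∈ stdSimplex ℝ ι) : Nonempty ι :=
  not_isEmpty_iff.1 fun _ => by rwa [stdSimplex_of_isEmpty_index] at hx

lemma exists_sum_Ioi_le_le_add_sum_Ioi (hx : x ∈ stdSimplex ℝ ι) (hz0 : 0 ≤ z) (hz1 : z ≤ 1) :
    ∃ J, ∑ k ∈ univ.filter (J < ·), x k ≤ z ∧ z ≤ x J + ∑ k ∈ univ.filter (J < ·), x k := by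
  have := nonempty_of_mem_stdSimplex hx
  set T : ι → ℝ := fun j => ∑ k ∈ univ.filter (j < ·), x k
  obtain ⟨top, htop⟩ := Finite.exists_max (id : ι → ι)
  have hTtop : T top ≤ z :=
    (sum_eq_zero fun k hk => absurd (htop k) (not_le.2 (mem_filter.1 hk).2)).trans_le hz0
  obtain ⟨J, hJ, hJmin⟩ :=
    exists_min_image (univ.filter fun j => T j ≤ z) id ⟨top, mem_filter.2 ⟨mem_univ _, hTtop⟩⟩
  refine ⟨J, (mem_filter.1 hJ).2, ?_⟩
  have hIci : x J + T J = ∑ k ∈ univ.filter (J ≤ ·), x k := by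
    rw [← add_sum_erase _ _ (mem_filter.2 ⟨mem_univ J, le_rfl⟩)]
    refine congrArg _ (sum_congr ?_ fun _ _ => rfl)
    ext k
    simp [lt_iff_le_and_ne, ne_comm, and_comm]
  rw [hIci]
  by_cases hbot : ∃ j, j < J
  · obtain ⟨j, hj⟩ := hbot
    obtain ⟨j₀, hj₀, hmax⟩ :=
      exists_max_image (univ.filter (· < J)) id ⟨j, mem_filter.2 ⟨mem_univ _, hj⟩⟩
    have hj₀J : j₀ < J := (mem_filter.1 hj₀).2
    have hT : T j₀ = ∑ k ∈ univ.filter (J ≤ ·), x k := by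
      refine sum_congr (filter_congr fun k _ => ⟨fun hk => ?_, hj₀J.trans_le⟩) fun _ _ => rfl
      by_contra hkJ
      exact (hmax k (mem_filter.2 ⟨mem_univ _, not_le.1 hkJ⟩)).not_gt hk
    rw [← hT]
    by_contra h
    exact (hJmin j₀ (mem_filter.2 ⟨mem_univ _, (not_le.1 h).le⟩)).not_gt hj₀J
  · push Not at hbot
    rw [filter_true_of_mem fun k _ => hbot k, hx.2]
    exact hz1

lemma exists_simplexCut_eq_dotProduct (hx : x ∈ stdSimplex ℝ ι) (hz0 : 0 ≤ z) (hz1 : z ≤ 1) :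
    ∃ u J, 0 ≤ u ∧ u ≤ x ∧ ∑ j, u j = z ∧ simplexCut w x z J = w ⬝ᵥ u := by
  obtain ⟨J, hTz, hzS⟩ := exists_sum_Ioi_le_le_add_sum_Ioi hx hz0 hz1
  set T := ∑ k ∈ univ.filter (J < ·), x k
  let tail : ι → ℝ := fun j => if J < j then x j else 0
  refine ⟨Pi.single J (z - T) + tail, J, ?_, ?_, ?_, ?_⟩
  · exact add_nonneg (Pi.single_nonneg.2 (sub_nonneg.2 hTz))
      fun j => by dsimp only [tail]; split_ifs <;> simp [hx.1 j]
  · intro j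
    by_cases hj : j = J
    · subst hj; simp [tail]; linarith
    · simp only [Pi.add_apply, Pi.single_apply, hj, if_false, zero_add, tail]
      split_ifs <;> simp [hx.1 j]
  · simp only [Pi.add_apply, sum_add_distrib, sum_pi_single', mem_univ, if_true, tail,
      ← sum_filter, T, sub_add_cancel]
  · rw [dotProduct_add, dotProduct_single]
    simp only [simplexCut, dotProduct, tail, mul_ite, mul_zero, ← sum_filter, T, sub_mul,
      sum_sub_distrib, ← mul_sum]
    ring

end Simplex

noncomputable section

/-- The product of simplices `Δ^{p₁} × ⋯ × Δ^{p_τ}`, with coordinates indexed by pairs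
`(i, j)` where `i : Fin τ` and `j : Fin (p i)`. -/
def Dprod {τ : ℕ} (p : Fin τ → ℕ) : Set ((Σ i : Fin τ, Fin (p i)) → ℝ) :=
  {x | ∀ i : Fin τ, (fun j : Fin (p i) => x ⟨i, j⟩) ∈ stdSimplex ℝ (Fin (p i))}

variable {τ : ℕ} {p : Fin τ → ℕ}

lemma dotProduct_sigma (w x : (Σ i : Fin τ, Fin (p i)) → ℝ) :
    w ⬝ᵥ x = ∑ i, (w ⟨i, ·⟩) ⬝ᵥ (x ⟨i, ·⟩) :=
  Fintype.sum_sigma _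

lemma inv_smul_mem_Dprod {u : (Σ i : Fin τ, Fin (p i)) → ℝ} {c : ℝ} (hc : 0 < c) (hu : 0 ≤ u)
    (hsum : ∀ i, ∑ j, u ⟨i, j⟩ = c) : c⁻¹ • u ∈ Dprod p :=
  fun i => ⟨fun j => smul_nonneg (inv_nonneg.2 hc.le) (hu _), by
    simp [← mul_sum, hsum i, hc.ne']⟩

def reluFormulation (p : Fin τ → ℕ) (w : (Σ i : Fin τ, Fin (p i)) → ℝ) (b : ℝ) :
    Set (((Σ i : Fin τ, Fin (p i)) → ℝ) × ℝ × ℝ) :=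
  {r | r.1 ∈ Dprod p ∧ 0 ≤ r.2.1 ∧ 0 ≤ r.2.2 ∧ r.2.2 ≤ 1 ∧ w ⬝ᵥ r.1 + b ≤ r.2.1 ∧
    ∀ J : (i : Fin τ) → Fin (p i),
      r.2.1 ≤ ∑ i, simplexCut (w ⟨i, ·⟩) (r.1 ⟨i, ·⟩) r.2.2 (J i) + b * r.2.2}

variable {w : (Σ i : Fin τ, Fin (p i)) → ℝ} {b : ℝ} {x : (Σ i : Fin τ, Fin (p i)) → ℝ} {y z : ℝ}

lemma mk_one_mem_reluFormulation (hw : ∀ i, Monotone fun j : Fin (p i) => w ⟨i, j⟩)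
    (hx : x ∈ Dprod p) (hf : 0 ≤ w ⬝ᵥ x + b) : (x, w ⬝ᵥ x + b, 1) ∈ reluFormulation p w b := by
  refine ⟨hx, hf, zero_le_one, le_rfl, le_rfl, fun J => ?_⟩
  dsimp only
  rw [dotProduct_sigma, mul_one]
  gcongr with i
  exact dotProduct_le_simplexCut_one (hw i) (hx i) (J i)

lemma mk_zero_mem_reluFormulation (hw : ∀ i, Monotone fun j : Fin (p i) => w ⟨i, j⟩)
    (hx : x ∈ Dprod p) (hf : w ⬝ᵥ x + b ≤ 0) : (x, 0, 0) ∈ reluFormulation p w b := by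
  refine ⟨hx, le_rfl, le_rfl, zero_le_one, hf, fun J => ?_⟩
  rw [mul_zero, add_zero]
  exact sum_nonneg fun i _ => simplexCut_zero_nonneg (hw i) (hx i).1 (J i)

lemma eq_of_mk_one_mem_reluFormulation (h : (x, y, 1) ∈ reluFormulation p w b) :
    y = w ⬝ᵥ x + b := by
  obtain ⟨hx, -, -, -, hlow, hup⟩ := h
  have hbot (i : Fin τ) : ∃ J : Fin (p i), IsBot J :=
    have := nonempty_of_mem_stdSimplex (hx i)
    Finite.exists_min id
  choose J hJ using hbot
  have := hup J
  rw [sum_congr rfl fun i _ => simplexCut_one_of_isBot _ (hx i).2 (hJ i), ← dotProduct_sigma,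
    mul_one] at this
  exact le_antisymm this hlow

lemma eq_zero_of_mk_zero_mem_reluFormulation (h : (x, y, 0) ∈ reluFormulation p w b) : y = 0 := by
  obtain ⟨hx, hy, -, -, -, hup⟩ := h
  have htop (i : Fin τ) : ∃ J : Fin (p i), IsTop J :=
    have := nonempty_of_mem_stdSimplex (hx i)
    Finite.exists_max id
  choose J hJ using htop
  have := hup J
  rw [sum_congr rfl fun i _ => simplexCut_zero_of_isTop _ _ (hJ i), sum_const_zero, mul_zero,
    add_zero] at this
  exact le_antisymm this hy

theorem image_reluFormulation_binary (hw : ∀ i, Monotone fun j : Fin (p i) => w ⟨i, j⟩) :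
    (fun r => (r.1, r.2.1)) '' {r ∈ reluFormulation p w b | r.2.2 = 0 ∨ r.2.2 = 1} =
      {q | q.1 ∈ Dprod p ∧ q.2 = max 0 (w ⬝ᵥ q.1 + b)} := by
  ext ⟨x, y⟩
  constructor
  · rintro ⟨⟨x, y, z⟩, ⟨h, rfl | rfl⟩, ⟨⟩⟩
    · obtain rfl := eq_zero_of_mk_zero_mem_reluFormulation h
      exact ⟨h.1, (max_eq_left h.2.2.2.2.1).symm⟩
    · obtain rfl := eq_of_mk_one_mem_reluFormulation h
      exact ⟨h.1, (max_eq_right h.2.1).symm⟩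
  · rintro ⟨hx, hy⟩
    dsimp only at hx hy
    subst hy
    rcases le_total 0 (w ⬝ᵥ x + b) with hf | hf
    · exact ⟨(x, _, 1), ⟨mk_one_mem_reluFormulation hw hx hf, Or.inr rfl⟩, by simp [hf]⟩
    · exact ⟨(x, 0, 0), ⟨mk_zero_mem_reluFormulation hw hx hf, Or.inl rfl⟩, by simp [hf]⟩

lemma exists_dotProduct_add_eq_of_mem_reluFormulation (h : (x, y, z) ∈ reluFormulation p w b) :
    ∃ u, 0 ≤ u ∧ u ≤ x ∧ (∀ i, ∑ j, u ⟨i, j⟩ = z) ∧ w ⬝ᵥ u + b * z = y := by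
  obtain ⟨hx, hy0, hz0, hz1, hlow, hup⟩ := h
  have hx0 : 0 ≤ x := fun q => (hx q.1).1 q.2
  choose v J hv0 hvx hvsum hvJ using
    fun i => exists_simplexCut_eq_dotProduct (w ⟨i, ·⟩) (hx i) hz0 hz1
  let ulo := z • x
  let uhi : (Σ i : Fin τ, Fin (p i)) → ℝ := fun q => v q.1 q.2
  have hlo : w ⬝ᵥ ulo + b * z ≤ y := by
    rw [dotProduct_smul, smul_eq_mul]
    nlinarith [mul_le_mul_of_nonneg_left hlow hz0, mul_le_of_le_one_left hy0 hz1]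
  have hhi : y ≤ w ⬝ᵥ uhi + b * z := by
    simpa only [dotProduct_sigma, hvJ] using hup J
  obtain ⟨s, t, hs, ht, hst, hy⟩ : y ∈ segment ℝ (w ⬝ᵥ ulo + b * z) (w ⬝ᵥ uhi + b * z) := by
    rw [segment_eq_Icc (hlo.trans hhi)]
    exact ⟨hlo, hhi⟩
  have hlox : ulo ≤ x := fun q => mul_le_of_le_one_left (hx0 q) hz1
  have hhix : uhi ≤ x := fun q => hvx q.1 q.2
  refine ⟨s • ulo + t • uhi, ?_, ?_, fun i => ?_, ?_⟩
  · exact add_nonneg (smul_nonneg hs (smul_nonneg hz0 hx0)) (smul_nonneg ht fun q => hv0 q.1 q.2)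
  · calc s • ulo + t • uhi ≤ s • x + t • x := by gcongr
      _ = x := by rw [← add_smul, hst, one_smul]
  · simp only [Pi.add_apply, Pi.smul_apply, smul_eq_mul, sum_add_distrib, ← mul_sum, ulo, uhi,
      (hx i).2, hvsum i]
    linear_combination z * hst
  · simp only [dotProduct_add, dotProduct_smul, smul_eq_mul] at hy ⊢
    linear_combination hy - b * z * hst

lemma mem_openSegment_of_mem_reluFormulation (hw : ∀ i, Monotone fun j : Fin (p i) => w ⟨i, j⟩)
    (h : (x, y, z) ∈ reluFormulation p w b) (hz0 : 0 < z) (hz1 : z < 1) :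
    ∃ x₀ x₁, (x₀, 0, 0) ∈ reluFormulation p w b ∧ (x₁, w ⬝ᵥ x₁ + b, 1) ∈ reluFormulation p w b ∧
      (x, y, z) ∈ openSegment ℝ (x₀, 0, 0) (x₁, w ⬝ᵥ x₁ + b, 1) := by
  obtain ⟨u, hu0, hux, hsum, hy⟩ := exists_dotProduct_add_eq_of_mem_reluFormulation h
  obtain ⟨hx, hy0, -, -, hlow, -⟩ := h
  have hz1' : 0 < 1 - z := sub_pos.2 hz1
  set x₁ := z⁻¹ • u
  set x₀ := (1 - z)⁻¹ • (x - u)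
  have hx₁ : x₁ ∈ Dprod p := inv_smul_mem_Dprod hz0 hu0 hsum
  have hx₀ : x₀ ∈ Dprod p := inv_smul_mem_Dprod hz1' (sub_nonneg.2 hux) fun i => by
    simp [sum_sub_distrib, (hx i).2, hsum i]
  have hf₁ : z * (w ⬝ᵥ x₁ + b) = y := by
    rw [← hy, dotProduct_smul, smul_eq_mul]
    field_simp
  have hf₀ : (1 - z) * (w ⬝ᵥ x₀ + b) = w ⬝ᵥ x + b - y := by
    rw [← hy, dotProduct_smul, dotProduct_sub, smul_eq_mul]
    field_simp
    ring
  have hf₀_nonpos : w ⬝ᵥ x₀ + b ≤ 0 :=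
    nonpos_of_mul_nonpos_right (hf₀.trans_le (sub_nonpos.2 hlow)) hz1'
  have hf₁_nonneg : 0 ≤ w ⬝ᵥ x₁ + b := nonneg_of_mul_nonneg_right (hf₁ ▸ hy0) hz0
  refine ⟨x₀, x₁, mk_zero_mem_reluFormulation hw hx₀ hf₀_nonpos,
    mk_one_mem_reluFormulation hw hx₁ hf₁_nonneg, 1 - z, z, hz1', hz0, by ring, ?_⟩
  ext
  · simp [x₀, x₁, smul_smul, hz0.ne', hz1'.ne']
  · simp [hf₁]
  · simp

theorem binary_of_mem_extremePoints_reluFormulation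
    (hw : ∀ i, Monotone fun j : Fin (p i) => w ⟨i, j⟩) {r}
    (hr : r ∈ (reluFormulation p w b).extremePoints ℝ) :
    r.2.2 = 0 ∨ r.2.2 = 1 := by
  obtain ⟨x, y, z⟩ := r
  obtain ⟨-, -, hz0, hz1, -⟩ := hr.1
  by_contra hbin
  push Not at hbin
  obtain ⟨x₀, x₁, h₀, h₁, hseg⟩ := mem_openSegment_of_mem_reluFormulation hw hr.1
    (hz0.lt_of_ne' hbin.1) (hz1.lt_of_ne hbin.2)
  exact hbin.1 (congrArg (·.2.2) (hr.2 h₀ h₁ hseg)).symm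

theorem stmt18_general {τ : ℕ} (p : Fin τ → ℕ)
    (w : (Σ i : Fin τ, Fin (p i)) → ℝ) (b : ℝ)
    (hsorted : ∀ i : Fin τ, Monotone fun j : Fin (p i) => w ⟨i, j⟩)
    (Q : Set (((Σ i : Fin τ, Fin (p i)) → ℝ) × ℝ × ℝ))
    (hQ : Q = {r | r.1 ∈ Dprod p ∧ 0 ≤ r.2.1 ∧ 0 ≤ r.2.2 ∧ r.2.2 ≤ 1
      ∧ ∑ q, w q * r.1 q + b ≤ r.2.1
      ∧ ∀ J : (i : Fin τ) → Fin (p i),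
          r.2.1 ≤ ∑ i, (w ⟨i, J i⟩ * r.2.2
            + ∑ j ∈ Finset.univ.filter (fun j => J i < j),
                (w ⟨i, j⟩ - w ⟨i, J i⟩) * r.1 ⟨i, j⟩)
          + b * r.2.2}) :
    -- (i) validity
    ((fun r : ((Σ i : Fin τ, Fin (p i)) → ℝ) × ℝ × ℝ => (r.1, r.2.1)) ''
        {r ∈ Q | r.2.2 = 0 ∨ r.2.2 = 1}
      = {q : ((Σ i : Fin τ, Fin (p i)) → ℝ) × ℝ | q.1 ∈ Dprod p
          ∧ q.2 = max 0 (∑ s, w s * q.1 s + b)})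
    -- (ii) every extreme point of Q has binary z
    ∧ (∀ r ∈ Set.extremePoints ℝ Q, r.2.2 = 0 ∨ r.2.2 = 1) := by
  obtain rfl : Q = reluFormulation p w b := hQ
  exact ⟨image_reluFormulation_binary hsorted,
    fun _ => binary_of_mem_extremePoints_reluFormulation hsorted⟩

theorem stmt18 {τ : ℕ} (hτ : 1 ≤ τ) (p : Fin τ → ℕ) (hp : ∀ i, 1 ≤ p i)
    (w : (Σ i : Fin τ, Fin (p i)) → ℝ) (b : ℝ)
    (hsorted : ∀ i : Fin τ, Monotone fun j : Fin (p i) => w ⟨i, j⟩)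
    (hirrpos : ∃ x ∈ Dprod p, 0 < ∑ q, w q * x q + b)
    (hirrneg : ∃ x ∈ Dprod p, ∑ q, w q * x q + b < 0)
    (Q : Set (((Σ i : Fin τ, Fin (p i)) → ℝ) × ℝ × ℝ))
    (hQ : Q = {r | r.1 ∈ Dprod p ∧ 0 ≤ r.2.1 ∧ 0 ≤ r.2.2 ∧ r.2.2 ≤ 1
      ∧ ∑ q, w q * r.1 q + b ≤ r.2.1
      ∧ ∀ J : (i : Fin τ) → Fin (p i),
          r.2.1 ≤ ∑ i, (w ⟨i, J i⟩ * r.2.2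
            + ∑ j ∈ Finset.univ.filter (fun j => J i < j),
                (w ⟨i, j⟩ - w ⟨i, J i⟩) * r.1 ⟨i, j⟩)
          + b * r.2.2}) :
    -- (i) validity
    ((fun r : ((Σ i : Fin τ, Fin (p i)) → ℝ) × ℝ × ℝ => (r.1, r.2.1)) ''
        {r ∈ Q | r.2.2 = 0 ∨ r.2.2 = 1}
      = {q : ((Σ i : Fin τ, Fin (p i)) → ℝ) × ℝ | q.1 ∈ Dprod p
          ∧ q.2 = max 0 (∑ s, w s * q.1 s + b)})
    -- (ii) every extreme point of Q has binary z
    ∧ (∀ r ∈ Set.extremePoints ℝ Q, r.2.2 = 0 ∨ r.2.2 = 1) :=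
  stmt18_general p w b hsorted Q hQ

end
end

section
/- Fix 0 < α < 1 and let M^+ = max_{x ∈ [L,U]} f(x) and M^− = min_{x ∈ [L,U]} f(x). Let Q ⊆ ℝ^η × ℝ × ℝ be the set of (x, y, z) with x ∈ [L, U], z ∈ [0, 1], satisfying: y ≥ f(x); y ≥ α f(x); y ≤ f(x) − (1 − α) M^− (1 − z); y ≤ α f(x) − (α − 1) M^+ z; and, for every subset I ⊆ {1,…,η}, y ≤ ( Σ_{i ∈ I} w_i (x_i − L̆_i (1 − z)) + ( b + Σ_{i ∉ I} w_i Ŭ_i ) z ) + α ( Σ_{i ∉ I} w_i (x_i − Ŭ_i z) + ( b + Σ_{i ∈ I} w_i L̆_i )(1 − z) ). Then Q together with z ∈ {0,1} is an ideal MIP formulation of gr(Leaky ∘ f; [L, U]): (i) the projection onto the (x, y)-coordinates of {(x,y,z) ∈ Q : z ∈ {0,1}} equals gr(Leaky ∘ f; [L, U]) = {(x, max{α f(x), f(x)}) : x ∈ [L, U]}; and (ii) every extreme point of Q satisfies z ∈ {0,1}. -/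
noncomputable section

/-- `L̆_i`: `L_i` if `w_i ≥ 0`, else `U_i`. -/
def breveL {n : ℕ} (w L U : Fin n → ℝ) (i : Fin n) : ℝ := if 0 ≤ w i then L i else U i

/-- `Ŭ_i`: `U_i` if `w_i ≥ 0`, else `L_i`. -/
def breveU {n : ℕ} (w L U : Fin n → ℝ) (i : Fin n) : ℝ := if 0 ≤ w i then U i else L i


/-! The points of `Q` with `z = 0` or `z = 1` are exactly the graph points `(x, α f x, 0)` with
`f x ≤ 0` and `(x, f x, 1)` with `f x ≥ 0`, which gives (i). For (ii), a point `(x, y, z)` of `Q`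
with `0 < z < 1` is written as `(1 - z) • (x₀, α f x₀, 0) + z • (x₁, f x₁, 1)` with both endpoints
in `Q`. Putting `t = z • x₁`, the condition `x₀, x₁ ∈ [L, U]` says that `t` lies in the box
`[(x - (1 - z) • U) ⊔ z • L, (x - (1 - z) • L) ⊓ z • U]`, and the value of `y` prescribes `w ⬝ t`.
This value lies between the minimum and the maximum of `w ⬝ ·` over that box, so the intermediate
value theorem provides `t`. The maximum is a sum of coordinatewise minima of two affine terms, and
the constraint of `Q` indexed by the set `I` of coordinates where the first term is the smaller one
is precisely the upper bound needed. -/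

open Finset

lemma mem_Icc_iff_forall {n : ℕ} {L U x : Fin n → ℝ} :
    x ∈ Set.Icc L U ↔ ∀ i, L i ≤ x i ∧ x i ≤ U i := by
  simp only [Set.mem_Icc, Pi.le_def, forall_and]

lemma dotp_eq_dotProduct {n : ℕ} (w x : Fin n → ℝ) : dotp w x = w ⬝ᵥ x := rfl

lemma continuous_dotp {n : ℕ} (w : Fin n → ℝ) : Continuous (dotp w) := by
  unfold dotp; fun_prop

lemma le_sSup_image_dotp_add {n : ℕ} (w : Fin n → ℝ) (b : ℝ) {L U v : Fin n → ℝ}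
    (hv : v ∈ Set.Icc L U) : dotp w v + b ≤ sSup ((fun x => dotp w x + b) '' Set.Icc L U) :=
  le_csSup (isCompact_Icc.image ((continuous_dotp w).add continuous_const)).bddAbove ⟨v, hv, rfl⟩

lemma sInf_image_dotp_add_le {n : ℕ} (w : Fin n → ℝ) (b : ℝ) {L U v : Fin n → ℝ}
    (hv : v ∈ Set.Icc L U) : sInf ((fun x => dotp w x + b) '' Set.Icc L U) ≤ dotp w v + b :=
  csInf_le (isCompact_Icc.image ((continuous_dotp w).add continuous_const)).bddBelow ⟨v, hv, rfl⟩

lemma sum_mul_sub_mul {ι : Type*} (s : Finset ι) (f g h : ι → ℝ) (c : ℝ) :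
    ∑ i ∈ s, f i * (g i - h i * c) = ∑ i ∈ s, f i * g i - c * ∑ i ∈ s, f i * h i := by
  rw [mul_sum, ← sum_sub_distrib]
  exact sum_congr rfl fun _ _ => by ring

lemma exists_sum_add_sum_compl_eq_sum_min {ι M : Type*} [Fintype ι] [DecidableEq ι]
    [AddCommMonoid M] [LinearOrder M] (a c : ι → M) :
    ∃ I : Finset ι, ∑ i ∈ I, a i + ∑ i ∈ Iᶜ, c i = ∑ i, min (a i) (c i) := by
  classical
  refine ⟨univ.filter fun i => a i ≤ c i, ?_⟩
  rw [← sum_add_sum_compl (univ.filter fun i => a i ≤ c i) fun i => min (a i) (c i)]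
  congr 1
  · exact sum_congr rfl fun i hi => (min_eq_left (mem_filter.1 hi).2).symm
  · exact sum_congr rfl fun i hi => (min_eq_right (by simpa using hi : c i < a i).le).symm

section SplitBox

variable {E : Type*} [AddCommGroup E] [Lattice E] [IsOrderedAddMonoid E] [Module ℝ E]
  [PosSMulMono ℝ E] {L U x t : E} {z : ℝ}

lemma smul_mem_Icc_sup_inf (hz : z ∈ Set.Ioo 0 1) (hx : x ∈ Set.Icc L U) :
    z • x ∈ Set.Icc ((x - (1 - z) • U) ⊔ z • L) ((x - (1 - z) • L) ⊓ z • U) := by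
  have hz' : 0 ≤ 1 - z := sub_nonneg.2 hz.2.le
  have hx' : x - z • x = (1 - z) • x := by module
  refine ⟨sup_le ?_ ?_, le_inf ?_ ?_⟩
  · rw [sub_le_comm, hx']; exact smul_le_smul_of_nonneg_left hx.2 hz'
  · exact smul_le_smul_of_nonneg_left hx.1 hz.1.le
  · rw [le_sub_comm, hx']; exact smul_le_smul_of_nonneg_left hx.1 hz'
  · exact smul_le_smul_of_nonneg_left hx.2 hz.1.le

lemma inv_smul_mem_Icc_of_mem_Icc_sup_inf [PosSMulReflectLE ℝ E] (hz : z ∈ Set.Ioo 0 1)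
    (ht : t ∈ Set.Icc ((x - (1 - z) • U) ⊔ z • L) ((x - (1 - z) • L) ⊓ z • U)) :
    z⁻¹ • t ∈ Set.Icc L U ∧ (1 - z)⁻¹ • (x - t) ∈ Set.Icc L U := by
  obtain ⟨hUt, hLt⟩ := sup_le_iff.1 ht.1
  obtain ⟨htL, htU⟩ := le_inf_iff.1 ht.2
  have hz' : 0 < 1 - z := sub_pos.2 hz.2
  exact ⟨⟨(le_inv_smul_iff_of_pos hz.1).2 hLt, (inv_smul_le_iff_of_pos hz.1).2 htU⟩,
    ⟨(le_inv_smul_iff_of_pos hz').2 (le_sub_comm.1 htL),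
      (inv_smul_le_iff_of_pos hz').2 (sub_le_comm.1 hUt)⟩⟩

end SplitBox

section Breve

variable {n : ℕ} (w : Fin n → ℝ) {L U x : Fin n → ℝ}

lemma mul_breveL_le (hx : x ∈ Set.Icc L U) (i : Fin n) : w i * breveL w L U i ≤ w i * x i := by
  unfold breveL
  split_ifs with h
  · exact mul_le_mul_of_nonneg_left (hx.1 i) h
  · exact mul_le_mul_of_nonpos_left (hx.2 i) (not_le.1 h).le

lemma mul_le_mul_breveU (hx : x ∈ Set.Icc L U) (i : Fin n) : w i * x i ≤ w i * breveU w L U i := by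
  unfold breveU
  split_ifs with h
  · exact mul_le_mul_of_nonneg_left (hx.2 i) h
  · exact mul_le_mul_of_nonpos_left (hx.1 i) (not_le.1 h).le

lemma sum_mul_breveL_le (hx : x ∈ Set.Icc L U) (s : Finset (Fin n)) :
    ∑ i ∈ s, w i * breveL w L U i ≤ ∑ i ∈ s, w i * x i :=
  sum_le_sum fun i _ => mul_breveL_le w hx i

lemma sum_mul_le_sum_mul_breveU (hx : x ∈ Set.Icc L U) (s : Finset (Fin n)) :
    ∑ i ∈ s, w i * x i ≤ ∑ i ∈ s, w i * breveU w L U i :=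
  sum_le_sum fun i _ => mul_le_mul_breveU w hx i

lemma breveL_mem_Icc (h : L ≤ U) : breveL w L U ∈ Set.Icc L U := by
  constructor <;> intro i <;> unfold breveL <;> split_ifs <;> simp [h i]

lemma breveU_mem_Icc (h : L ≤ U) : breveU w L U ∈ Set.Icc L U := by
  constructor <;> intro i <;> unfold breveU <;> split_ifs <;> simp [h i]

lemma exists_mem_Icc_dotp_eq (h : L ≤ U) {t : ℝ}
    (ht : t ∈ Set.Icc (dotp w (breveL w L U)) (dotp w (breveU w L U))) :
    ∃ x ∈ Set.Icc L U, dotp w x = t :=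
  (convex_Icc L U).isPreconnected.intermediate_value (breveL_mem_Icc w h) (breveU_mem_Icc w h)
    (continuous_dotp w).continuousOn ht

lemma mul_breveU_sup_inf (l₁ l₂ u₁ u₂ : Fin n → ℝ) (i : Fin n) :
    w i * breveU w (l₁ ⊔ l₂) (u₁ ⊓ u₂) i
      = min (w i * breveU w l₁ u₁ i) (w i * breveU w l₂ u₂ i) := by
  unfold breveU
  split_ifs with h
  · exact mul_min_of_nonneg _ _ h
  · exact (antitone_mul_left (not_le.1 h).le).map_max

lemma breveU_smul (c : ℝ) : breveU w (c • L) (c • U) = c • breveU w L U := by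
  ext i; by_cases h : 0 ≤ w i <;> simp [breveU, h]

lemma breveU_sub_smul (c : ℝ) :
    breveU w (x - c • U) (x - c • L) = x - c • breveL w L U := by
  ext i; by_cases h : 0 ≤ w i <;> simp [breveU, breveL, h]

end Breve

lemma exists_openSegment_graph_of_mem_Icc_sup_inf {n : ℕ} {w : Fin n → ℝ} {b α : ℝ}
    {L U x t : Fin n → ℝ} {y z : ℝ} (hα : α < 1) (hz : z ∈ Set.Ioo 0 1)
    (hyf : dotp w x + b ≤ y) (hyαf : α * (dotp w x + b) ≤ y)
    (ht : t ∈ Set.Icc ((x - (1 - z) • U) ⊔ z • L) ((x - (1 - z) • L) ⊓ z • U))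
    (hT : (1 - α) * (z * b + dotp w t) = y - α * (dotp w x + b)) :
    ∃ x₀ ∈ Set.Icc L U, ∃ x₁ ∈ Set.Icc L U, dotp w x₀ + b ≤ 0 ∧ 0 ≤ dotp w x₁ + b ∧
      (x, y, z) ∈ openSegment ℝ (x₀, α * (dotp w x₀ + b), 0) (x₁, dotp w x₁ + b, 1) := by
  have hα' : 0 < 1 - α := sub_pos.2 hα
  have hz' : 0 < 1 - z := sub_pos.2 hz.2
  have hz0 : z ≠ 0 := hz.1.ne'
  have hz0' : 1 - z ≠ 0 := hz'.ne'
  obtain ⟨hx₁, hx₀⟩ := inv_smul_mem_Icc_of_mem_Icc_sup_inf hz ht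
  have hf₁ : z * (dotp w (z⁻¹ • t) + b) = z * b + dotp w t := by
    rw [dotp_eq_dotProduct, dotProduct_smul, smul_eq_mul, dotp_eq_dotProduct]
    field_simp
    ring
  have hf₀ : (1 - z) * (dotp w ((1 - z)⁻¹ • (x - t)) + b)
      = dotp w x + b - (z * b + dotp w t) := by
    rw [dotp_eq_dotProduct, dotProduct_smul, smul_eq_mul, dotProduct_sub, dotp_eq_dotProduct,
      dotp_eq_dotProduct]
    field_simp
    ring
  refine ⟨_, hx₀, _, hx₁, ?_, ?_, 1 - z, z, hz', hz.1, by ring, ?_⟩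
  · have : dotp w x + b ≤ z * b + dotp w t := le_of_mul_le_mul_left (by linarith) hα'
    exact nonpos_of_mul_nonpos_right (by linarith) hz'
  · have : 0 ≤ z * b + dotp w t := nonneg_of_mul_nonneg_right (by linarith) hα'
    exact nonneg_of_mul_nonneg_right (by linarith) hz.1
  · refine Prod.ext ?_ (Prod.ext ?_ ?_)
    · simp [smul_smul, hz0, hz0']
    · simp only [Prod.smul_mk, Prod.mk_add_mk, smul_eq_mul]
      linear_combination α * hf₀ + hf₁ + hT
    · simp

def leakyFormulation {n : ℕ} (w : Fin n → ℝ) (b α : ℝ) (L U : Fin n → ℝ) (Mm Mp : ℝ) :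
    Set ((Fin n → ℝ) × ℝ × ℝ) :=
  {p | (∀ i, L i ≤ p.1 i ∧ p.1 i ≤ U i) ∧ 0 ≤ p.2.2 ∧ p.2.2 ≤ 1
      ∧ dotp w p.1 + b ≤ p.2.1
      ∧ α * (dotp w p.1 + b) ≤ p.2.1
      ∧ p.2.1 ≤ dotp w p.1 + b - (1 - α) * Mm * (1 - p.2.2)
      ∧ p.2.1 ≤ α * (dotp w p.1 + b) - (α - 1) * Mp * p.2.2
      ∧ ∀ I : Finset (Fin n),
          p.2.1 ≤ (∑ i ∈ I, w i * (p.1 i - breveL w L U i * (1 - p.2.2))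
              + (b + ∑ i ∈ Iᶜ, w i * breveU w L U i) * p.2.2)
            + α * (∑ i ∈ Iᶜ, w i * (p.1 i - breveU w L U i * p.2.2)
              + (b + ∑ i ∈ I, w i * breveL w L U i) * (1 - p.2.2))}

namespace leakyFormulation

variable {n : ℕ} {w : Fin n → ℝ} {b α : ℝ} {L U : Fin n → ℝ} {Mm Mp : ℝ} {x : Fin n → ℝ}
  {y z : ℝ}

lemma mk_one_mem (hα : α ≤ 1) (hx : x ∈ Set.Icc L U) (hf : 0 ≤ dotp w x + b)
    (hMp : dotp w x + b ≤ Mp) : (x, dotp w x + b, 1) ∈ leakyFormulation w b α L U Mm Mp := by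
  refine ⟨mem_Icc_iff_forall.1 hx, zero_le_one, le_rfl, le_rfl, by nlinarith, by simp,
    by nlinarith, fun I => ?_⟩
  have hU := sum_mul_le_sum_mul_breveU w hx Iᶜ
  have hsplit := sum_add_sum_compl I fun i => w i * x i
  simp only [sub_self, mul_zero, sub_zero, mul_one, mul_sub, sum_sub_distrib]
  unfold dotp
  nlinarith

lemma mk_zero_mem (hα : α ≤ 1) (hx : x ∈ Set.Icc L U) (hf : dotp w x + b ≤ 0)
    (hMm : Mm ≤ dotp w x + b) :
    (x, α * (dotp w x + b), 0) ∈ leakyFormulation w b α L U Mm Mp := by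
  refine ⟨mem_Icc_iff_forall.1 hx, le_rfl, zero_le_one, by nlinarith, le_rfl, by nlinarith,
    by simp, fun I => ?_⟩
  have hL := sum_mul_breveL_le w hx I
  have hsplit := sum_add_sum_compl I fun i => w i * x i
  simp only [sub_zero, mul_zero, add_zero, mul_one, mul_sub, sum_sub_distrib]
  unfold dotp
  nlinarith

lemma eq_max_of_mem (hp : (x, y, z) ∈ leakyFormulation w b α L U Mm Mp) (hz : z = 0 ∨ z = 1) :
    y = max (α * (dotp w x + b)) (dotp w x + b) := by
  obtain ⟨-, -, -, hyf, hyαf, hy₀, hy₁, -⟩ := hp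
  rcases hz with rfl | rfl
  · have : y ≤ α * (dotp w x + b) := by simpa using hy₁
    rw [max_eq_left (by linarith)]; linarith
  · have : y ≤ dotp w x + b := by simpa using hy₀
    rw [max_eq_right (by linarith)]; linarith

lemma image_binary_eq_graph (hα : α ≤ 1) (hMp : ∀ v ∈ Set.Icc L U, dotp w v + b ≤ Mp)
    (hMm : ∀ v ∈ Set.Icc L U, Mm ≤ dotp w v + b) :
    (fun p : (Fin n → ℝ) × ℝ × ℝ => (p.1, p.2.1)) ''
        {p ∈ leakyFormulation w b α L U Mm Mp | p.2.2 = 0 ∨ p.2.2 = 1}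
      = {q : (Fin n → ℝ) × ℝ | (∀ i, L i ≤ q.1 i ∧ q.1 i ≤ U i)
          ∧ q.2 = max (α * (dotp w q.1 + b)) (dotp w q.1 + b)} := by
  ext ⟨x, y⟩
  constructor
  · rintro ⟨⟨x, y, z⟩, ⟨hp, hz⟩, ⟨⟩⟩
    exact ⟨hp.1, eq_max_of_mem hp hz⟩
  · rintro ⟨hx, hy⟩
    dsimp only at hx hy
    subst hy
    replace hx : x ∈ Set.Icc L U := mem_Icc_iff_forall.2 hx
    rcases le_total 0 (dotp w x + b) with hf | hf
    · refine ⟨_, ⟨mk_one_mem hα hx hf (hMp x hx), Or.inr rfl⟩, ?_⟩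
      rw [max_eq_right (by nlinarith)]
    · refine ⟨_, ⟨mk_zero_mem hα hx hf (hMm x hx), Or.inl rfl⟩, ?_⟩
      rw [max_eq_left (by nlinarith)]

lemma sub_le_of_mem (hp : (x, y, z) ∈ leakyFormulation w b α L U Mm Mp) (I : Finset (Fin n)) :
    y - α * (dotp w x + b) ≤ (1 - α) * (z * b + (∑ i ∈ I, w i * (x i - (1 - z) * breveL w L U i)
      + ∑ i ∈ Iᶜ, w i * (z * breveU w L U i))) := by
  obtain ⟨-, -, -, -, -, -, -, hI⟩ := hp
  have h := hI I
  have hsplit := sum_add_sum_compl I fun i => w i * x i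
  simp only [sum_mul_sub_mul] at h
  simp only [mul_comm (1 - z), mul_comm z, sum_mul_sub_mul, ← sum_mul, ← mul_assoc]
  unfold dotp
  linear_combination h + α * hsplit

lemma sub_le_dotp_breveU_sup_inf (hp : (x, y, z) ∈ leakyFormulation w b α L U Mm Mp) :
    y - α * (dotp w x + b) ≤ (1 - α) * (z * b
      + dotp w (breveU w ((x - (1 - z) • U) ⊔ z • L) ((x - (1 - z) • L) ⊓ z • U))) := by
  have hmin : dotp w (breveU w ((x - (1 - z) • U) ⊔ z • L) ((x - (1 - z) • L) ⊓ z • U))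
      = ∑ i, min (w i * (x i - (1 - z) * breveL w L U i)) (w i * (z * breveU w L U i)) := by
    refine sum_congr rfl fun i _ => ?_
    rw [mul_breveU_sup_inf, breveU_sub_smul, breveU_smul]
    rfl
  obtain ⟨I, hI⟩ := exists_sum_add_sum_compl_eq_sum_min
    (fun i => w i * (x i - (1 - z) * breveL w L U i)) (fun i => w i * (z * breveU w L U i))
  rw [hmin, ← hI]
  exact sub_le_of_mem hp I

lemma exists_openSegment_of_mem (hα : α < 1)
    (hp : (x, y, z) ∈ leakyFormulation w b α L U Mm Mp) (hz : z ∈ Set.Ioo 0 1) :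
    ∃ x₀ ∈ Set.Icc L U, ∃ x₁ ∈ Set.Icc L U, dotp w x₀ + b ≤ 0 ∧ 0 ≤ dotp w x₁ + b ∧
      (x, y, z) ∈ openSegment ℝ (x₀, α * (dotp w x₀ + b), 0) (x₁, dotp w x₁ + b, 1) := by
  set l := (x - (1 - z) • U) ⊔ z • L
  set u := (x - (1 - z) • L) ⊓ z • U
  have hα' : 0 < 1 - α := sub_pos.2 hα
  have hyf : dotp w x + b ≤ y := hp.2.2.2.1
  have hyαf : α * (dotp w x + b) ≤ y := hp.2.2.2.2.1
  have hzx : z • x ∈ Set.Icc l u := smul_mem_Icc_sup_inf hz (mem_Icc_iff_forall.2 hp.1)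
  have hzf : (1 - α) * (z * (dotp w x + b)) ≤ y - α * (dotp w x + b) := by
    rcases le_total 0 (dotp w x + b) with hf | hf
    · nlinarith [mul_nonneg hα'.le (mul_nonneg (sub_nonneg.2 hz.2.le) hf)]
    · nlinarith [mul_nonpos_of_nonneg_of_nonpos hα'.le (mul_nonpos_of_nonneg_of_nonpos hz.1.le hf)]
  have hlow : (1 - α) * (z * b + dotp w (breveL w l u)) ≤ y - α * (dotp w x + b) := by
    have h := sum_mul_breveL_le w hzx univ
    simp only [Pi.smul_apply, smul_eq_mul, mul_left_comm _ z, ← mul_sum] at h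
    unfold dotp at hzf ⊢
    nlinarith
  obtain ⟨t, ht, hdt⟩ := exists_mem_Icc_dotp_eq w (hzx.1.trans hzx.2)
    (t := (y - α * (dotp w x + b)) / (1 - α) - z * b)
    ⟨by rw [le_sub_iff_add_le, le_div_iff₀ hα']; linarith,
      by rw [sub_le_iff_le_add, div_le_iff₀ hα']; linarith [sub_le_dotp_breveU_sup_inf hp]⟩
  refine exists_openSegment_graph_of_mem_Icc_sup_inf hα hz hyf hyαf ht ?_
  rw [hdt]; field_simp; ring

lemma binary_of_mem_extremePoints (hα : α < 1) (hMp : ∀ v ∈ Set.Icc L U, dotp w v + b ≤ Mp)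
    (hMm : ∀ v ∈ Set.Icc L U, Mm ≤ dotp w v + b) {p : (Fin n → ℝ) × ℝ × ℝ}
    (hp : p ∈ (leakyFormulation w b α L U Mm Mp).extremePoints ℝ) : p.2.2 = 0 ∨ p.2.2 = 1 := by
  obtain ⟨x, y, z⟩ := p
  rw [mem_extremePoints] at hp
  by_contra! hz
  have hz' : z ∈ Set.Ioo 0 1 :=
    ⟨lt_of_le_of_ne hp.1.2.1 (Ne.symm hz.1), lt_of_le_of_ne hp.1.2.2.1 hz.2⟩
  obtain ⟨x₀, hx₀, x₁, hx₁, hf₀, hf₁, hseg⟩ := exists_openSegment_of_mem hα hp.1 hz'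
  have h := hp.2 _ (mk_zero_mem hα.le hx₀ hf₀ (hMm x₀ hx₀)) _
    (mk_one_mem hα.le hx₁ hf₁ (hMp x₁ hx₁)) hseg
  exact hz.1 (congrArg (·.2.2) h.1).symm

end leakyFormulation

theorem stmt19_general {η : ℕ}
    (w : Fin η → ℝ) (b : ℝ) (α : ℝ) (hα : 0 < α ∧ α < 1)
    (L U : Fin η → ℝ)
    -- M⁺ = max of f over the box, M⁻ = min of f over the box (both attained, the box
    -- being compact, so they coincide with sSup/sInf of the image of f)
    (Mp Mm : ℝ)
    (hMp : Mp = sSup ((fun x => dotp w x + b) '' {x | ∀ i, L i ≤ x i ∧ x i ≤ U i}))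
    (hMm : Mm = sInf ((fun x => dotp w x + b) '' {x | ∀ i, L i ≤ x i ∧ x i ≤ U i}))
    (Q : Set ((Fin η → ℝ) × ℝ × ℝ))
    (hQ : Q = {p | (∀ i, L i ≤ p.1 i ∧ p.1 i ≤ U i) ∧ 0 ≤ p.2.2 ∧ p.2.2 ≤ 1
      ∧ dotp w p.1 + b ≤ p.2.1
      ∧ α * (dotp w p.1 + b) ≤ p.2.1
      ∧ p.2.1 ≤ dotp w p.1 + b - (1 - α) * Mm * (1 - p.2.2)
      ∧ p.2.1 ≤ α * (dotp w p.1 + b) - (α - 1) * Mp * p.2.2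
      ∧ ∀ I : Finset (Fin η),
          p.2.1 ≤ (∑ i ∈ I, w i * (p.1 i - breveL w L U i * (1 - p.2.2))
              + (b + ∑ i ∈ Iᶜ, w i * breveU w L U i) * p.2.2)
            + α * (∑ i ∈ Iᶜ, w i * (p.1 i - breveU w L U i * p.2.2)
              + (b + ∑ i ∈ I, w i * breveL w L U i) * (1 - p.2.2))}) :
    -- (i) validity
    ((fun p : (Fin η → ℝ) × ℝ × ℝ => (p.1, p.2.1)) ''
        {p ∈ Q | p.2.2 = 0 ∨ p.2.2 = 1}
      = {q : (Fin η → ℝ) × ℝ | (∀ i, L i ≤ q.1 i ∧ q.1 i ≤ U i)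
          ∧ q.2 = max (α * (dotp w q.1 + b)) (dotp w q.1 + b)})
    -- (ii) every extreme point of Q has binary z
    ∧ (∀ p ∈ Set.extremePoints ℝ Q, p.2.2 = 0 ∨ p.2.2 = 1) := by
  have hbox : {x : Fin η → ℝ | ∀ i, L i ≤ x i ∧ x i ≤ U i} = Set.Icc L U :=
    Set.ext fun _ => mem_Icc_iff_forall.symm
  rw [hbox] at hMp hMm
  have hfMp : ∀ v ∈ Set.Icc L U, dotp w v + b ≤ Mp :=
    fun v hv => hMp ▸ le_sSup_image_dotp_add w b hv
  have hfMm : ∀ v ∈ Set.Icc L U, Mm ≤ dotp w v + b :=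
    fun v hv => hMm ▸ sInf_image_dotp_add_le w b hv
  subst hQ
  exact ⟨leakyFormulation.image_binary_eq_graph hα.2.le hfMp hfMm,
    fun p hp => leakyFormulation.binary_of_mem_extremePoints hα.2 hfMp hfMm hp⟩

theorem stmt19 {η : ℕ} (hη : 1 ≤ η)
    (w : Fin η → ℝ) (b : ℝ) (α : ℝ) (hα : 0 < α ∧ α < 1)
    (L U : Fin η → ℝ) (hLU : ∀ i, L i ≤ U i)
    (hirrpos : ∃ x : Fin η → ℝ, (∀ i, L i ≤ x i ∧ x i ≤ U i) ∧ 0 < dotp w x + b)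
    (hirrneg : ∃ x : Fin η → ℝ, (∀ i, L i ≤ x i ∧ x i ≤ U i) ∧ dotp w x + b < 0)
    -- M⁺ = max of f over the box, M⁻ = min of f over the box (both attained, the box
    -- being compact, so they coincide with sSup/sInf of the image of f)
    (Mp Mm : ℝ)
    (hMp : Mp = sSup ((fun x => dotp w x + b) '' {x | ∀ i, L i ≤ x i ∧ x i ≤ U i}))
    (hMm : Mm = sInf ((fun x => dotp w x + b) '' {x | ∀ i, L i ≤ x i ∧ x i ≤ U i}))
    (Q : Set ((Fin η → ℝ) × ℝ × ℝ))
    (hQ : Q = {p | (∀ i, L i ≤ p.1 i ∧ p.1 i ≤ U i) ∧ 0 ≤ p.2.2 ∧ p.2.2 ≤ 1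
      ∧ dotp w p.1 + b ≤ p.2.1
      ∧ α * (dotp w p.1 + b) ≤ p.2.1
      ∧ p.2.1 ≤ dotp w p.1 + b - (1 - α) * Mm * (1 - p.2.2)
      ∧ p.2.1 ≤ α * (dotp w p.1 + b) - (α - 1) * Mp * p.2.2
      ∧ ∀ I : Finset (Fin η),
          p.2.1 ≤ (∑ i ∈ I, w i * (p.1 i - breveL w L U i * (1 - p.2.2))
              + (b + ∑ i ∈ Iᶜ, w i * breveU w L U i) * p.2.2)
            + α * (∑ i ∈ Iᶜ, w i * (p.1 i - breveU w L U i * p.2.2)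
              + (b + ∑ i ∈ I, w i * breveL w L U i) * (1 - p.2.2))}) :
    -- (i) validity
    ((fun p : (Fin η → ℝ) × ℝ × ℝ => (p.1, p.2.1)) ''
        {p ∈ Q | p.2.2 = 0 ∨ p.2.2 = 1}
      = {q : (Fin η → ℝ) × ℝ | (∀ i, L i ≤ q.1 i ∧ q.1 i ≤ U i)
          ∧ q.2 = max (α * (dotp w q.1 + b)) (dotp w q.1 + b)})
    -- (ii) every extreme point of Q has binary z
    ∧ (∀ p ∈ Set.extremePoints ℝ Q, p.2.2 = 0 ∨ p.2.2 = 1) :=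
  stmt19_general w b α hα L U Mp Mm hMp hMm Q hQ
end
end
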